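/- Spectral bounds for the signal matrix: let R* := Ω · Z · Θᵀ (an N×J real matrix) and σ_⋆(Θ) := inf{‖Θ · x‖ : x ∈ ℝ^K, ‖x‖ = 1}. Then: (i) ‖R*‖ ≤ (max_{k ∈ Fin K} sqrt(Σ_{i ∈ C_k} (ω i)²)) · ‖Θ‖; and (ii) there exists a K-dimensional linear subspace S of ℝ^N (namely the column span of Ω·Z) such that for every v ∈ S, ‖(R*)ᵀ · v‖ ≥ (min_{k ∈ Fin K} sqrt(Σ_{i ∈ C_k} (ω i)²)) · σ_⋆(Θ) · ‖v‖. (By the Courant–Fischer variational characterization, (ii) means that the K-th largest singular value of R* is at least min_k sqrt(Σ_{i ∈ C_k} (ω i)²) · σ_⋆(Θ).) -/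

import Mathlib

/-!
Write `M = Ω Z`, so that `R* = M Θᵀ`. The vector `M x` has entries `ω i * x (s i)`; grouping
the entries by cluster shows `‖M x‖ = ‖W x‖`, hence `(min W) ‖x‖ ≤ ‖M x‖ ≤ (max W) ‖x‖`.
The upper bound and `‖Θᵀ‖ = ‖Θ‖` give (i). For (ii) take `S = range M`, which is `K`-dimensional
because the lower bound makes `M` injective. For `v = M x` we have `R*ᵀ v = Θ (Mᵀ M x)`, and
`‖M x‖² = ⟪Mᵀ M x, x⟫ ≤ ‖Mᵀ M x‖ ‖x‖` together with the lower bound yields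
`(min W) ‖M x‖ ≤ ‖Mᵀ M x‖`; finally `‖Θ y‖ ≥ σ_⋆(Θ) ‖y‖`.
-/

open Matrix Finset

noncomputable section

/-- The k-th cluster: indices assigned to latent class k. -/
def clusterSet {N K : ℕ} (s : Fin N → Fin K) (k : Fin K) : Finset (Fin N) :=
  Finset.univ.filter (fun i => s i = k)

/-- The N×K cluster-indicator matrix Z. -/
def clusterInd {N K : ℕ} (s : Fin N → Fin K) : Matrix (Fin N) (Fin K) ℝ :=
  fun i k => if s i = k then 1 else 0

/-- The N×N diagonal matrix Ω of degree parameters. -/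
def degMat {N : ℕ} (ω : Fin N → ℝ) : Matrix (Fin N) (Fin N) ℝ :=
  Matrix.diagonal ω

/-- The ℓ²→ℓ² operator norm of a real matrix. -/
def opNorm {m n : ℕ} (A : Matrix (Fin m) (Fin n) ℝ) : ℝ :=
  ‖LinearMap.toContinuousLinearMap (Matrix.toEuclideanLin A)‖

/-- The smallest singular value of a real matrix:
`σ_⋆(A) = inf {‖A x‖ : ‖x‖ = 1}` with Euclidean norms. -/
def sigmaStar {m n : ℕ} (A : Matrix (Fin m) (Fin n) ℝ) : ℝ :=
  sInf ((fun x : EuclideanSpace ℝ (Fin n) => ‖Matrix.toEuclideanLin A x‖) '' {x | ‖x‖ = 1})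

theorem EuclideanSpace.norm_le_norm_of_forall_norm_le {𝕜 ι : Type*} [RCLike 𝕜] [Fintype ι]
    {x y : EuclideanSpace 𝕜 ι} (h : ∀ i, ‖x i‖ ≤ ‖y i‖) : ‖x‖ ≤ ‖y‖ := by
  rw [EuclideanSpace.norm_eq, EuclideanSpace.norm_eq]
  gcongr with i
  exact h i

theorem Matrix.toEuclideanLin_diagonal_apply {𝕜 ι : Type*} [RCLike 𝕜] [Fintype ι] [DecidableEq ι]
    (d : ι → 𝕜) (x : EuclideanSpace 𝕜 ι) (i : ι) :
    toEuclideanLin (diagonal d) x i = d i * x i :=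
  mulVec_diagonal d x.ofLp i

theorem Matrix.mul_norm_le_norm_toEuclideanLin_diagonal {𝕜 ι : Type*} [RCLike 𝕜] [Fintype ι]
    [DecidableEq ι] {d : ι → 𝕜} {c : ℝ} (hc : 0 ≤ c) (hd : ∀ i, c ≤ ‖d i‖)
    (x : EuclideanSpace 𝕜 ι) : c * ‖x‖ ≤ ‖toEuclideanLin (diagonal d) x‖ := by
  rw [← abs_of_nonneg hc, ← Real.norm_eq_abs, ← norm_smul]
  refine EuclideanSpace.norm_le_norm_of_forall_norm_le fun i => ?_
  rw [PiLp.smul_apply, toEuclideanLin_diagonal_apply, norm_smul, norm_mul, Real.norm_of_nonneg hc]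
  exact mul_le_mul_of_nonneg_right (hd i) (norm_nonneg _)

theorem Matrix.norm_toEuclideanLin_diagonal_le {𝕜 ι : Type*} [RCLike 𝕜] [Fintype ι]
    [DecidableEq ι] {d : ι → 𝕜} {C : ℝ} (hC : 0 ≤ C) (hd : ∀ i, ‖d i‖ ≤ C)
    (x : EuclideanSpace 𝕜 ι) : ‖toEuclideanLin (diagonal d) x‖ ≤ C * ‖x‖ := by
  rw [← abs_of_nonneg hC, ← Real.norm_eq_abs, ← norm_smul]
  refine EuclideanSpace.norm_le_norm_of_forall_norm_le fun i => ?_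
  rw [PiLp.smul_apply, toEuclideanLin_diagonal_apply, norm_smul, norm_mul, Real.norm_of_nonneg hC]
  exact mul_le_mul_of_nonneg_right (hd i) (norm_nonneg _)

theorem LinearMap.mul_norm_le_norm_adjoint_apply {𝕜 E F : Type*} [RCLike 𝕜]
    [NormedAddCommGroup E] [InnerProductSpace 𝕜 E] [FiniteDimensional 𝕜 E]
    [NormedAddCommGroup F] [InnerProductSpace 𝕜 F] [FiniteDimensional 𝕜 F]
    (A : E →ₗ[𝕜] F) {c : ℝ} (hc : 0 ≤ c) (hA : ∀ x, c * ‖x‖ ≤ ‖A x‖) (x : E) :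
    c * ‖A x‖ ≤ ‖adjoint A (A x)‖ := by
  have hgram : ‖A x‖ ^ 2 ≤ ‖adjoint A (A x)‖ * ‖x‖ := by
    rw [@norm_sq_eq_re_inner 𝕜, ← adjoint_inner_left]
    exact re_inner_le_norm _ _
  rcases (norm_nonneg (A x)).eq_or_lt with hAx | hAx
  · rw [← hAx, mul_zero]
    exact norm_nonneg _
  refine le_of_mul_le_mul_right ?_ hAx
  calc c * ‖A x‖ * ‖A x‖ = c * ‖A x‖ ^ 2 := by ring
    _ ≤ c * (‖adjoint A (A x)‖ * ‖x‖) := by gcongr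
    _ = ‖adjoint A (A x)‖ * (c * ‖x‖) := by ring
    _ ≤ ‖adjoint A (A x)‖ * ‖A x‖ := by gcongr; exact hA x

theorem sigmaStar_nonneg {m n : ℕ} (A : Matrix (Fin m) (Fin n) ℝ) : 0 ≤ sigmaStar A :=
  Real.sInf_nonneg (by rintro _ ⟨x, -, rfl⟩; positivity)

theorem sigmaStar_mul_norm_le {m n : ℕ} (A : Matrix (Fin m) (Fin n) ℝ)
    (y : EuclideanSpace ℝ (Fin n)) : sigmaStar A * ‖y‖ ≤ ‖toEuclideanLin A y‖ := by
  rcases eq_or_ne y 0 with rfl | hy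
  · simp
  have hy' : 0 < ‖y‖ := norm_pos_iff.2 hy
  have hunit : sigmaStar A ≤ ‖toEuclideanLin A (‖y‖⁻¹ • y)‖ := by
    refine csInf_le ⟨0, ?_⟩ ⟨‖y‖⁻¹ • y, ?_, rfl⟩
    · rintro _ ⟨x, -, rfl⟩
      positivity
    · simp [norm_smul, hy'.ne']
  rw [map_smul, norm_smul, norm_inv, norm_norm] at hunit
  rwa [← le_div_iff₀ hy', div_eq_inv_mul]

theorem opNorm_mul_transpose_le {m n p : ℕ} {A : Matrix (Fin m) (Fin n) ℝ} {C : ℝ} (hC : 0 ≤ C)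
    (hA : ∀ x, ‖toEuclideanLin A x‖ ≤ C * ‖x‖) (B : Matrix (Fin p) (Fin n) ℝ) :
    opNorm (A * Bᵀ) ≤ C * opNorm B := by
  have hAC : opNorm A ≤ C := ContinuousLinearMap.opNorm_le_bound _ hC hA
  have hBt : opNorm Bᵀ = opNorm B := by
    rw [← conjTranspose_eq_transpose_of_trivial]
    exact l2_opNorm_conjTranspose B
  calc opNorm (A * Bᵀ) ≤ opNorm A * opNorm Bᵀ := l2_opNorm_mul A Bᵀ
    _ ≤ C * opNorm B := by
      rw [hBt]
      exact mul_le_mul_of_nonneg_right hAC (norm_nonneg _)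

theorem mul_sigmaStar_mul_norm_le_transpose_apply {m n p : ℕ} {A : Matrix (Fin m) (Fin n) ℝ}
    {c : ℝ} (hc : 0 ≤ c) (hA : ∀ x, c * ‖x‖ ≤ ‖toEuclideanLin A x‖)
    (B : Matrix (Fin p) (Fin n) ℝ) {v : EuclideanSpace ℝ (Fin m)}
    (hv : v ∈ LinearMap.range (toEuclideanLin A)) :
    c * sigmaStar B * ‖v‖ ≤ ‖toEuclideanLin (A * Bᵀ)ᵀ v‖ := by
  obtain ⟨x, rfl⟩ := hv
  have hadj : toEuclideanLin Aᵀ = LinearMap.adjoint (toEuclideanLin A) := by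
    rw [← conjTranspose_eq_transpose_of_trivial]
    exact toEuclideanLin_conjTranspose_eq_adjoint A
  have hAtA : c * ‖toEuclideanLin A x‖ ≤ ‖toEuclideanLin Aᵀ (toEuclideanLin A x)‖ := by
    rw [hadj]
    exact (toEuclideanLin A).mul_norm_le_norm_adjoint_apply hc hA x
  rw [transpose_mul, transpose_transpose, toLpLin_mul_same, LinearMap.comp_apply]
  calc c * sigmaStar B * ‖toEuclideanLin A x‖ = sigmaStar B * (c * ‖toEuclideanLin A x‖) := by ring
    _ ≤ sigmaStar B * ‖toEuclideanLin Aᵀ (toEuclideanLin A x)‖ :=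
      mul_le_mul_of_nonneg_left hAtA (sigmaStar_nonneg B)
    _ ≤ _ := sigmaStar_mul_norm_le B _

theorem finrank_range_toEuclideanLin_of_mul_norm_le {m n : ℕ} {A : Matrix (Fin m) (Fin n) ℝ}
    {c : ℝ} (hc : 0 < c) (hA : ∀ x, c * ‖x‖ ≤ ‖toEuclideanLin A x‖) :
    Module.finrank ℝ (LinearMap.range (toEuclideanLin A)) = n := by
  have hinj : Function.Injective (toEuclideanLin A) := by
    refine (injective_iff_map_eq_zero _).2 fun x hx => ?_
    have := hA x
    rw [hx, norm_zero] at this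
    exact norm_le_zero_iff.1 (nonpos_of_mul_nonpos_right this hc)
  rw [LinearMap.finrank_range_of_inj hinj, finrank_euclideanSpace_fin]

def clusterWeight {N K : ℕ} (s : Fin N → Fin K) (ω : Fin N → ℝ) (k : Fin K) : ℝ :=
  √(∑ i ∈ clusterSet s k, ω i ^ 2)

theorem clusterWeight_nonneg {N K : ℕ} (s : Fin N → Fin K) (ω : Fin N → ℝ) (k : Fin K) :
    0 ≤ clusterWeight s ω k :=
  Real.sqrt_nonneg _

theorem clusterWeight_pos {N K : ℕ} {s : Fin N → Fin K} {ω : Fin N → ℝ} {k : Fin K}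
    (hs : (clusterSet s k).Nonempty) (hω : ∀ i, 0 < ω i) : 0 < clusterWeight s ω k :=
  Real.sqrt_pos.2 (sum_pos (fun i _ => pow_pos (hω i) 2) hs)

theorem toEuclideanLin_degMat_mul_clusterInd_apply {N K : ℕ} (s : Fin N → Fin K)
    (ω : Fin N → ℝ) (x : EuclideanSpace ℝ (Fin K)) (i : Fin N) :
    toEuclideanLin (degMat ω * clusterInd s) x i = ω i * x (s i) := by
  change ((diagonal ω * clusterInd s) *ᵥ x.ofLp) i = _
  rw [← mulVec_mulVec, mulVec_diagonal]
  simp [clusterInd, mulVec, dotProduct]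

theorem norm_toEuclideanLin_degMat_mul_clusterInd {N K : ℕ} (s : Fin N → Fin K)
    (ω : Fin N → ℝ) (x : EuclideanSpace ℝ (Fin K)) :
    ‖toEuclideanLin (degMat ω * clusterInd s) x‖ =
      ‖toEuclideanLin (diagonal (clusterWeight s ω)) x‖ := by
  rw [← sq_eq_sq₀ (norm_nonneg _) (norm_nonneg _), EuclideanSpace.real_norm_sq_eq,
    EuclideanSpace.real_norm_sq_eq, ← sum_fiberwise univ s]
  refine sum_congr rfl fun k _ => ?_
  rw [toEuclideanLin_diagonal_apply, mul_pow, clusterWeight,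
    Real.sq_sqrt (sum_nonneg fun i _ => sq_nonneg _), sum_mul]
  refine sum_congr rfl fun i hi => ?_
  rw [toEuclideanLin_degMat_mul_clusterInd_apply, (mem_filter.1 hi).2, mul_pow]

section ClusterBounds

variable {N K : ℕ} (s : Fin N → Fin K) (ω : Fin N → ℝ) (hK : (univ : Finset (Fin K)).Nonempty)

theorem sup'_clusterWeight_nonneg : 0 ≤ univ.sup' hK (clusterWeight s ω) :=
  le_sup'_of_le _ (mem_univ hK.choose) (clusterWeight_nonneg s ω _)

theorem inf'_clusterWeight_mul_norm_le (x : EuclideanSpace ℝ (Fin K)) :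
    univ.inf' hK (clusterWeight s ω) * ‖x‖ ≤ ‖toEuclideanLin (degMat ω * clusterInd s) x‖ := by
  rw [norm_toEuclideanLin_degMat_mul_clusterInd]
  refine mul_norm_le_norm_toEuclideanLin_diagonal
    (le_inf' _ _ fun k _ => clusterWeight_nonneg s ω k) (fun k => ?_) x
  rw [Real.norm_of_nonneg (clusterWeight_nonneg s ω k)]
  exact inf'_le _ (mem_univ k)

theorem norm_le_sup'_clusterWeight_mul (x : EuclideanSpace ℝ (Fin K)) :
    ‖toEuclideanLin (degMat ω * clusterInd s) x‖ ≤ univ.sup' hK (clusterWeight s ω) * ‖x‖ := by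
  rw [norm_toEuclideanLin_degMat_mul_clusterInd]
  refine norm_toEuclideanLin_diagonal_le (sup'_clusterWeight_nonneg s ω hK) (fun k => ?_) x
  rw [Real.norm_of_nonneg (clusterWeight_nonneg s ω k)]
  exact le_sup' _ (mem_univ k)

end ClusterBounds

theorem stmt5_general (N J K : ℕ) (hK : 0 < K)
    (s : Fin N → Fin K) (hs : ∀ k, (clusterSet s k).Nonempty)
    (ω : Fin N → ℝ) (hω : ∀ i, 0 < ω i)
    (Θ : Matrix (Fin J) (Fin K) ℝ) :
    opNorm (degMat ω * clusterInd s * Θᵀ) ≤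
      (Finset.univ.sup' ⟨⟨0, hK⟩, Finset.mem_univ _⟩
        (fun k => Real.sqrt (∑ i ∈ clusterSet s k, ω i ^ 2))) * opNorm Θ ∧
    ∃ S : Submodule ℝ (EuclideanSpace ℝ (Fin N)),
      Module.finrank ℝ S = K ∧
      ∀ v ∈ S,
        (Finset.univ.inf' ⟨⟨0, hK⟩, Finset.mem_univ _⟩
            (fun k => Real.sqrt (∑ i ∈ clusterSet s k, ω i ^ 2))) * sigmaStar Θ * ‖v‖ ≤
          ‖Matrix.toEuclideanLin (degMat ω * clusterInd s * Θᵀ)ᵀ v‖ := by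
  have hK' : (univ : Finset (Fin K)).Nonempty := ⟨⟨0, hK⟩, mem_univ _⟩
  have hlower := inf'_clusterWeight_mul_norm_le s ω hK'
  have hupper := norm_le_sup'_clusterWeight_mul s ω hK'
  have hinf_pos : 0 < univ.inf' hK' (clusterWeight s ω) :=
    (lt_inf'_iff _).2 fun k _ => clusterWeight_pos (hs k) hω
  exact ⟨opNorm_mul_transpose_le (sup'_clusterWeight_nonneg s ω hK') hupper Θ,
    LinearMap.range (toEuclideanLin (degMat ω * clusterInd s)),
    finrank_range_toEuclideanLin_of_mul_norm_le hinf_pos hlower,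
    fun v hv => mul_sigmaStar_mul_norm_le_transpose_apply hinf_pos.le hlower Θ hv⟩

theorem stmt5 (N J K : ℕ) (hN : 0 < N) (hJ : 0 < J) (hK : 0 < K)
    (s : Fin N → Fin K) (hs : ∀ k, (clusterSet s k).Nonempty)
    (ω : Fin N → ℝ) (hω : ∀ i, 0 < ω i)
    (Θ : Matrix (Fin J) (Fin K) ℝ) :
    opNorm (degMat ω * clusterInd s * Θᵀ) ≤
      (Finset.univ.sup' ⟨⟨0, hK⟩, Finset.mem_univ _⟩
        (fun k => Real.sqrt (∑ i ∈ clusterSet s k, ω i ^ 2))) * opNorm Θ ∧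
    ∃ S : Submodule ℝ (EuclideanSpace ℝ (Fin N)),
      Module.finrank ℝ S = K ∧
      ∀ v ∈ S,
        (Finset.univ.inf' ⟨⟨0, hK⟩, Finset.mem_univ _⟩
            (fun k => Real.sqrt (∑ i ∈ clusterSet s k, ω i ^ 2))) * sigmaStar Θ * ‖v‖ ≤
          ‖Matrix.toEuclideanLin (degMat ω * clusterInd s * Θᵀ)ᵀ v‖ :=
  stmt5_general N J K hK s hs ω hω Θ
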